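/- Let s₀, s₁ ∈ ℝ, 0 < p₀ < p₁ ≤ ∞, 0 < q ≤ ∞, and f = (f_{j,γ})_{(j,γ)∈ℕ×Γ} with nonnegative entries. For each j, let K(t, f_j, B₀, B₁) = 2^{j(s₀+n/2−n/p₀)} K(t·2^{j s̃}, f_j, ℓ^{p₀}(Γ), ℓ^{p₁}(Γ)) with s̃ = s₁−s₀+n/p₀−n/p₁ be the single-layer K-functional. Then the full K-functional of the mixed-norm couple satisfies K(t, f, ℓ̃^{s₀,q}_{p₀}, ℓ̃^{s₁,q}_{p₁}) ≍ (Σ_{j≥0} K(t, f_j, B₀, B₁)^q)^{1/q}, with implicit constants independent of f and t. -/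

import Mathlib

open Set ENNReal

/-- `ℓ^p` quasi-norm (in `ℝ≥0∞`) of an `ℝ≥0∞`-valued sequence; supremum when `p = ∞`. -/
noncomputable def elp (p : ℝ≥0∞) {Γ : Type*} (g : Γ → ℝ≥0∞) : ℝ≥0∞ :=
  if p = ∞ then ⨆ γ, g γ else (∑' γ, g γ ^ p.toReal) ^ (1 / p.toReal)

/-- The mixed quasi-norm of `ℓ̃^{s,q}_p`:
`(Σ_j (2^{j(s+n/2-n/p)} ‖f_j‖_{ℓ^p(Γ)})^q)^{1/q}` (supremum when `q = ∞`). -/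
noncomputable def mixedNorm (n : ℕ) (s : ℝ) (p q : ℝ≥0∞) {Γ : Type*}
    (f : ℕ → Γ → ℝ≥0∞) : ℝ≥0∞ :=
  elp q (fun j : ℕ =>
    ENNReal.ofReal ((2:ℝ) ^ ((j:ℝ) * (s + (n:ℝ)/2 - (n:ℝ) / p.toReal))) * elp p (f j))

/-- K-functional of the mixed-norm couple. -/
noncomputable def Kmix (n : ℕ) (s₀ s₁ : ℝ) (p₀ p₁ q : ℝ≥0∞) {Γ : Type*}
    (t : ℝ≥0∞) (f : ℕ → Γ → ℝ≥0∞) : ℝ≥0∞ :=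
  ⨅ (g : ℕ → Γ → ℝ≥0∞) (h : ℕ → Γ → ℝ≥0∞) (_ : f = g + h),
    mixedNorm n s₀ p₀ q g + t * mixedNorm n s₁ p₁ q h

/-- Single-layer K-functional of `(ℓ^{p₀}(Γ), ℓ^{p₁}(Γ))`. -/
noncomputable def Klayer (p₀ p₁ : ℝ≥0∞) {Γ : Type*} (t : ℝ≥0∞) (fj : Γ → ℝ≥0∞) : ℝ≥0∞ :=
  ⨅ (g : Γ → ℝ≥0∞) (h : Γ → ℝ≥0∞) (_ : fj = g + h), elp p₀ g + t * elp p₁ h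

/- ### Auxiliary lemmas -/

lemma elp_mono (p : ℝ≥0∞) {ι : Type*} {x y : ι → ℝ≥0∞} (h : ∀ i, x i ≤ y i) :
    elp p x ≤ elp p y := by
  rcases eq_or_ne p ∞ with hp | hp
  · simp only [elp, if_pos hp]
    exact iSup_mono h
  · simp only [elp, if_neg hp]
    refine ENNReal.rpow_le_rpow ?_ (by positivity)
    exact ENNReal.tsum_le_tsum fun i => ENNReal.rpow_le_rpow (h i) ENNReal.toReal_nonneg

lemma elp_const_mul (p : ℝ≥0∞) (hp : p ≠ 0) (c : ℝ≥0∞) {ι : Type*} (x : ι → ℝ≥0∞) :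
    elp p (fun i => c * x i) = c * elp p x := by
  rcases eq_or_ne p ∞ with h | h
  · simp only [elp, if_pos h]
    exact (ENNReal.mul_iSup c x).symm
  · have hr : 0 < p.toReal := ENNReal.toReal_pos hp h
    simp only [elp, if_neg h]
    simp_rw [ENNReal.mul_rpow_of_nonneg _ _ hr.le, ENNReal.tsum_mul_left,
      ENNReal.mul_rpow_of_nonneg _ _ (by positivity : (0:ℝ) ≤ 1 / p.toReal)]
    rw [← ENNReal.rpow_mul, mul_one_div, div_self hr.ne', ENNReal.rpow_one]

lemma rpow_add_le_aux (a b : ℝ≥0∞) {r : ℝ} (hr : 0 ≤ r) :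
    (a + b) ^ r ≤ 2 ^ r * (a ^ r + b ^ r) := by
  calc (a + b) ^ r ≤ (2 * max a b) ^ r := by
        refine ENNReal.rpow_le_rpow ?_ hr
        rw [two_mul]
        exact add_le_add (le_max_left a b) (le_max_right a b)
    _ = 2 ^ r * max a b ^ r := ENNReal.mul_rpow_of_nonneg _ _ hr
    _ ≤ 2 ^ r * (a ^ r + b ^ r) := by
        gcongr
        rcases le_total a b with h | h
        · rw [max_eq_right h]; exact le_add_self
        · rw [max_eq_left h]; exact self_le_add_right _ _

lemma elp_add_le (q : ℝ≥0∞) (hq : q ≠ 0) {ι : Type*} (x y : ι → ℝ≥0∞) :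
    elp q (fun i => x i + y i) ≤ 2 ^ (1 + (q⁻¹).toReal) * (elp q x + elp q y) := by
  rcases eq_or_ne q ∞ with h | h
  · subst h
    simp only [elp, if_true, ENNReal.inv_top, ENNReal.toReal_zero, add_zero,
      ENNReal.rpow_one, eq_self_iff_true]
    refine (iSup_le fun i => add_le_add (le_iSup x i) (le_iSup y i)).trans ?_
    exact le_mul_of_one_le_left zero_le (by norm_num)
  · have hr : 0 < q.toReal := ENNReal.toReal_pos hq h
    have hinv : (q⁻¹).toReal = 1 / q.toReal := by
      rw [ENNReal.toReal_inv, one_div]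
    simp only [elp, if_neg h]
    have key : (∑' i, (x i + y i) ^ q.toReal) ≤
        2 ^ q.toReal * ((∑' i, x i ^ q.toReal) + ∑' i, y i ^ q.toReal) := by
      rw [← ENNReal.tsum_add, ← ENNReal.tsum_mul_left]
      exact ENNReal.tsum_le_tsum fun i => rpow_add_le_aux _ _ hr.le
    calc (∑' i, (x i + y i) ^ q.toReal) ^ (1 / q.toReal)
        ≤ (2 ^ q.toReal * ((∑' i, x i ^ q.toReal) + ∑' i, y i ^ q.toReal)) ^ (1 / q.toReal) :=
          ENNReal.rpow_le_rpow key (by positivity)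
      _ = 2 * (((∑' i, x i ^ q.toReal) + ∑' i, y i ^ q.toReal)) ^ (1 / q.toReal) := by
          rw [ENNReal.mul_rpow_of_nonneg _ _ (by positivity : (0:ℝ) ≤ 1 / q.toReal),
            ← ENNReal.rpow_mul, mul_one_div, div_self hr.ne', ENNReal.rpow_one]
      _ ≤ 2 * (2 ^ (1 / q.toReal) *
            ((∑' i, x i ^ q.toReal) ^ (1 / q.toReal) + (∑' i, y i ^ q.toReal) ^ (1 / q.toReal))) := by
          gcongr
          exact rpow_add_le_aux _ _ (by positivity)
      _ = 2 ^ (1 + (q⁻¹).toReal) *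
            ((∑' i, x i ^ q.toReal) ^ (1 / q.toReal) + (∑' i, y i ^ q.toReal) ^ (1 / q.toReal)) := by
          rw [← mul_assoc, hinv]
          congr 1
          rw [ENNReal.rpow_add _ _ (by norm_num) (by norm_num), ENNReal.rpow_one]

lemma elp_geom_ne_top (q : ℝ≥0∞) (hq : q ≠ 0) :
    elp q (fun j : ℕ => (2⁻¹ : ℝ≥0∞) ^ j) ≠ ∞ := by
  rcases eq_or_ne q ∞ with h | h
  · simp only [elp, if_pos h]
    refine ne_top_of_le_ne_top (by norm_num : (1:ℝ≥0∞) ≠ ∞) (iSup_le fun j => ?_)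
    exact pow_le_one₀ (by norm_num) (by norm_num)
  · have hr : 0 < q.toReal := ENNReal.toReal_pos hq h
    simp only [elp, if_neg h]
    have hrw : ∀ j : ℕ, ((2⁻¹ : ℝ≥0∞) ^ j) ^ q.toReal = ((2⁻¹ : ℝ≥0∞) ^ q.toReal) ^ j := by
      intro j
      rw [← ENNReal.rpow_natCast (2⁻¹ : ℝ≥0∞) j, ← ENNReal.rpow_mul, mul_comm,
        ENNReal.rpow_mul, ENNReal.rpow_natCast]
    rw [tsum_congr hrw, ENNReal.tsum_geometric]
    refine ENNReal.rpow_ne_top_of_nonneg (by positivity) ?_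
    have hlt : (2⁻¹ : ℝ≥0∞) ^ q.toReal < 1 :=
      ENNReal.rpow_lt_one (by rw [ENNReal.inv_lt_one]; exact one_lt_two) hr
    simp only [ne_eq, ENNReal.inv_eq_top]
    rw [tsub_eq_zero_iff_le]
    exact fun hle => absurd (lt_of_le_of_lt hle hlt) (lt_irrefl _)

lemma ennreal_mul_iInf {ι : Sort*} (c : ℝ≥0∞) (hc0 : c ≠ 0) (hct : c ≠ ∞) (v : ι → ℝ≥0∞) :
    c * ⨅ i, v i = ⨅ i, c * v i := by
  apply le_antisymm
  · exact le_iInf fun i => mul_le_mul_right (iInf_le _ i) c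
  · have h1 : ∀ i, (⨅ k, c * v k) / c ≤ v i := by
      intro i
      rw [ENNReal.div_le_iff hc0 hct]
      exact (iInf_le _ i).trans (by rw [mul_comm])
    calc ⨅ i, c * v i = c * ((⨅ i, c * v i) / c) := (ENNReal.mul_div_cancel hc0 hct).symm
      _ ≤ c * ⨅ i, v i := mul_le_mul_right (le_iInf h1) c

/-- For `s₀, s₁ ∈ ℝ`, `0 < p₀ < p₁ ≤ ∞` and `0 < q ≤ ∞`, the K-functional of the
mixed-norm couple is equivalent to the `ℓ^q` norm (over layers `j`) of the
single-layer K-functionals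
`K(t, f_j) = 2^{j(s₀+n/2-n/p₀)} K(t·2^{js̃}, f_j, ℓ^{p₀}(Γ), ℓ^{p₁}(Γ))`,
with `s̃ = s₁ - s₀ + n/p₀ - n/p₁` and constants independent of `f` and `t`. -/
theorem stmt19 {Γ : Type*} [Countable Γ] (n : ℕ) (s₀ s₁ : ℝ) (p₀ p₁ q : ℝ≥0∞)
    (hp₀ : 0 < p₀) (hp₀₁ : p₀ < p₁) (hq : 0 < q) :
    ∃ C : ℝ≥0∞, 0 < C ∧ C ≠ ∞ ∧ ∀ (f : ℕ → Γ → ℝ≥0∞) (t : ℝ≥0∞), 0 < t →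
      Kmix n s₀ s₁ p₀ p₁ q t f ≤
        C * elp q (fun j : ℕ =>
          ENNReal.ofReal ((2:ℝ) ^ ((j:ℝ) * (s₀ + (n:ℝ)/2 - (n:ℝ)/p₀.toReal))) *
            Klayer p₀ p₁
              (t * ENNReal.ofReal
                ((2:ℝ) ^ ((j:ℝ) * (s₁ - s₀ + (n:ℝ)/p₀.toReal - (n:ℝ)/p₁.toReal))))
              (f j)) ∧
      elp q (fun j : ℕ =>
          ENNReal.ofReal ((2:ℝ) ^ ((j:ℝ) * (s₀ + (n:ℝ)/2 - (n:ℝ)/p₀.toReal))) *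
            Klayer p₀ p₁
              (t * ENNReal.ofReal
                ((2:ℝ) ^ ((j:ℝ) * (s₁ - s₀ + (n:ℝ)/p₀.toReal - (n:ℝ)/p₁.toReal))))
              (f j)) ≤ C * Kmix n s₀ s₁ p₀ p₁ q t f := by
  classical
  set Cq : ℝ≥0∞ := 2 ^ (1 + (q⁻¹).toReal) with hCq
  set C : ℝ≥0∞ := 2 ^ (2 + (q⁻¹).toReal) with hC
  have htoRealnn : (0:ℝ) ≤ (q⁻¹).toReal := ENNReal.toReal_nonneg
  have hCq0 : Cq ≠ 0 := by
    simp only [hCq]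
    exact (ENNReal.rpow_pos (by norm_num) (by norm_num)).ne'
  have hCqtop : Cq ≠ ∞ := ENNReal.rpow_ne_top_of_nonneg (by linarith) (by norm_num)
  have hC0 : 0 < C := ENNReal.rpow_pos (by norm_num) (by norm_num)
  have hCtop : C ≠ ∞ := ENNReal.rpow_ne_top_of_nonneg (by linarith) (by norm_num)
  have hC2Cq : C = 2 * Cq := by
    rw [hC, hCq, show (2:ℝ) + (q⁻¹).toReal = 1 + (1 + (q⁻¹).toReal) by ring,
      ENNReal.rpow_add _ _ (by norm_num) (by norm_num), ENNReal.rpow_one]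
  have hCqleC : Cq ≤ C := by
    rw [hC2Cq]
    exact le_mul_of_one_le_left zero_le (by norm_num)
  refine ⟨C, hC0, hCtop, ?_⟩
  intro f t ht
  -- weights
  set a₀ : ℝ := s₀ + (n:ℝ)/2 - (n:ℝ)/p₀.toReal with ha₀
  set a₁ : ℝ := s₁ + (n:ℝ)/2 - (n:ℝ)/p₁.toReal with ha₁
  set sm : ℝ := s₁ - s₀ + (n:ℝ)/p₀.toReal - (n:ℝ)/p₁.toReal with hsm
  set A₀ : ℕ → ℝ≥0∞ := fun j => ENNReal.ofReal ((2:ℝ) ^ ((j:ℝ) * a₀)) with hA₀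
  set A₁ : ℕ → ℝ≥0∞ := fun j => ENNReal.ofReal ((2:ℝ) ^ ((j:ℝ) * a₁)) with hA₁
  set U : ℕ → ℝ≥0∞ := fun j => ENNReal.ofReal ((2:ℝ) ^ ((j:ℝ) * sm)) with hU
  have hA₀0 : ∀ j, A₀ j ≠ 0 := fun j => by
    simp only [hA₀, ne_eq, ENNReal.ofReal_eq_zero, not_le]
    positivity
  have hA₀top : ∀ j, A₀ j ≠ ∞ := fun j => ENNReal.ofReal_ne_top
  have hA₀U : ∀ j, A₀ j * U j = A₁ j := by
    intro j
    simp only [hA₀, hU, hA₁]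
    rw [← ENNReal.ofReal_mul (by positivity), ← Real.rpow_add (by norm_num : (0:ℝ) < 2)]
    congr 1
    rw [ha₀, hsm, ha₁]
    ring_nf
  set R : ℝ≥0∞ := elp q (fun j : ℕ => A₀ j * Klayer p₀ p₁ (t * U j) (f j)) with hR
  constructor
  · -- Kmix ≤ C * R
    apply ENNReal.le_of_forall_pos_le_add
    intro ε hε _
    set G : ℝ≥0∞ := elp q (fun j : ℕ => (2⁻¹ : ℝ≥0∞) ^ j) with hG
    have hGtop : G ≠ ∞ := elp_geom_ne_top q hq.ne'
    set δ : ℝ≥0∞ := (ε : ℝ≥0∞) / (C * G) with hδ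
    have hδ0 : 0 < δ :=
      ENNReal.div_pos (by exact_mod_cast hε.ne') (ENNReal.mul_ne_top hCtop hGtop)
    have hCδG : C * (δ * G) ≤ ε := by
      calc C * (δ * G) = (C * G) * ((ε : ℝ≥0∞) / (C * G)) := by rw [hδ]; ring
        _ ≤ ε := ENNReal.mul_div_le
    -- choose near-optimal decompositions layerwise
    have hchoice : ∀ j : ℕ, ∃ gj hj : Γ → ℝ≥0∞, f j = gj + hj ∧
        elp p₀ gj + (t * U j) * elp p₁ hj ≤
          Klayer p₀ p₁ (t * U j) (f j) + δ * (2⁻¹ : ℝ≥0∞) ^ j / A₀ j := by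
      intro j
      rcases eq_or_ne (Klayer p₀ p₁ (t * U j) (f j)) ∞ with hK | hK
      · exact ⟨f j, 0, by simp, by rw [hK]; simp⟩
      · have hslack : (0:ℝ≥0∞) < δ * (2⁻¹ : ℝ≥0∞) ^ j / A₀ j := by
          refine ENNReal.div_pos ?_ (hA₀top j)
          exact (mul_pos hδ0.ne' (pow_ne_zero j (by norm_num))).ne'
        have hlt : Klayer p₀ p₁ (t * U j) (f j) <
            Klayer p₀ p₁ (t * U j) (f j) + δ * (2⁻¹ : ℝ≥0∞) ^ j / A₀ j :=
          ENNReal.lt_add_right hK hslack.ne'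
        conv_lhs at hlt => rw [Klayer]
        simp only [iInf_lt_iff] at hlt
        obtain ⟨gj, hj, hgh, hle⟩ := hlt
        exact ⟨gj, hj, hgh, hle.le⟩
    choose g h hgh hcost using hchoice
    have hf : f = g + h := funext hgh
    have step1 : Kmix n s₀ s₁ p₀ p₁ q t f ≤
        mixedNorm n s₀ p₀ q g + t * mixedNorm n s₁ p₁ q h := by
      rw [Kmix]
      exact iInf_le_of_le g (iInf_le_of_le h (iInf_le_of_le hf le_rfl))
    have hmix0 : mixedNorm n s₀ p₀ q g = elp q (fun j => A₀ j * elp p₀ (g j)) := rfl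
    have hmix1 : t * mixedNorm n s₁ p₁ q h =
        elp q (fun j => t * (A₁ j * elp p₁ (h j))) := by
      rw [mixedNorm, ← elp_const_mul q hq.ne']
    set X : ℕ → ℝ≥0∞ := fun j => A₀ j * elp p₀ (g j) with hX
    set Y : ℕ → ℝ≥0∞ := fun j => t * (A₁ j * elp p₁ (h j)) with hY
    have step2 : elp q X + elp q Y ≤ 2 * elp q (fun j => X j + Y j) := by
      rw [two_mul]
      exact add_le_add (elp_mono q fun j => le_add_right le_rfl)
        (elp_mono q fun j => le_add_left le_rfl)
    have hXY : ∀ j, X j + Y j ≤ A₀ j * Klayer p₀ p₁ (t * U j) (f j) + δ * (2⁻¹ : ℝ≥0∞) ^ j := by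
      intro j
      have : X j + Y j = A₀ j * (elp p₀ (g j) + (t * U j) * elp p₁ (h j)) := by
        show A₀ j * elp p₀ (g j) + t * (A₁ j * elp p₁ (h j)) = _
        rw [← hA₀U j]; ring
      rw [this]
      calc A₀ j * (elp p₀ (g j) + (t * U j) * elp p₁ (h j))
          ≤ A₀ j * (Klayer p₀ p₁ (t * U j) (f j) + δ * (2⁻¹ : ℝ≥0∞) ^ j / A₀ j) :=
            mul_le_mul_right (hcost j) _
        _ = A₀ j * Klayer p₀ p₁ (t * U j) (f j) +
              A₀ j * (δ * (2⁻¹ : ℝ≥0∞) ^ j / A₀ j) := mul_add _ _ _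
        _ = A₀ j * Klayer p₀ p₁ (t * U j) (f j) + δ * (2⁻¹ : ℝ≥0∞) ^ j := by
            rw [ENNReal.mul_div_cancel (hA₀0 j) (hA₀top j)]
    have step3 : elp q (fun j => X j + Y j) ≤
        Cq * (R + elp q (fun j => δ * (2⁻¹ : ℝ≥0∞) ^ j)) := by
      calc elp q (fun j => X j + Y j)
          ≤ elp q (fun j => A₀ j * Klayer p₀ p₁ (t * U j) (f j) + δ * (2⁻¹ : ℝ≥0∞) ^ j) :=
            elp_mono q hXY
        _ ≤ Cq * (R + elp q (fun j => δ * (2⁻¹ : ℝ≥0∞) ^ j)) := elp_add_le q hq.ne' _ _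
    have hgeom : elp q (fun j : ℕ => δ * (2⁻¹ : ℝ≥0∞) ^ j) = δ * G := by
      rw [hG, ← elp_const_mul q hq.ne']
    calc Kmix n s₀ s₁ p₀ p₁ q t f
        ≤ elp q X + elp q Y := by rw [← hmix0, ← hmix1] at *; exact step1
      _ ≤ 2 * elp q (fun j => X j + Y j) := step2
      _ ≤ 2 * (Cq * (R + elp q (fun j => δ * (2⁻¹ : ℝ≥0∞) ^ j))) := mul_le_mul_right step3 2
      _ = C * R + C * (δ * G) := by rw [hgeom, hC2Cq]; ring
      _ ≤ C * R + ε := add_le_add le_rfl hCδG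
  · -- R ≤ C * Kmix
    rw [Kmix, ennreal_mul_iInf C hC0.ne' hCtop]
    refine le_iInf fun g => ?_
    rw [ennreal_mul_iInf C hC0.ne' hCtop]
    refine le_iInf fun h => ?_
    rw [ennreal_mul_iInf C hC0.ne' hCtop]
    refine le_iInf fun hf => ?_
    -- per-layer bound
    have hlayer : ∀ j, A₀ j * Klayer p₀ p₁ (t * U j) (f j) ≤
        A₀ j * elp p₀ (g j) + t * (A₁ j * elp p₁ (h j)) := by
      intro j
      have hfj : f j = g j + h j := by rw [hf]; rfl
      have hKle : Klayer p₀ p₁ (t * U j) (f j) ≤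
          elp p₀ (g j) + (t * U j) * elp p₁ (h j) := by
        rw [Klayer]
        exact iInf_le_of_le (g j) (iInf_le_of_le (h j) (iInf_le_of_le hfj le_rfl))
      calc A₀ j * Klayer p₀ p₁ (t * U j) (f j)
          ≤ A₀ j * (elp p₀ (g j) + (t * U j) * elp p₁ (h j)) := mul_le_mul_right hKle _
        _ = A₀ j * elp p₀ (g j) + t * ((A₀ j * U j) * elp p₁ (h j)) := by ring
        _ = A₀ j * elp p₀ (g j) + t * (A₁ j * elp p₁ (h j)) := by rw [hA₀U j]
    calc R ≤ elp q (fun j => A₀ j * elp p₀ (g j) + t * (A₁ j * elp p₁ (h j))) :=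
          elp_mono q hlayer
      _ ≤ Cq * (elp q (fun j => A₀ j * elp p₀ (g j)) +
            elp q (fun j => t * (A₁ j * elp p₁ (h j)))) := elp_add_le q hq.ne' _ _
      _ = Cq * (mixedNorm n s₀ p₀ q g + t * mixedNorm n s₁ p₁ q h) := by
          rw [elp_const_mul q hq.ne' t]
          rfl
      _ ≤ C * (mixedNorm n s₀ p₀ q g + t * mixedNorm n s₁ p₁ q h) :=
          mul_le_mul_left hCqleC _
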